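/- Let q ≥ 3 be a prime, n ≥ 3 an integer, F an admissible subset of G = (ℤ/qℤ)ⁿ, and m a coefficient system for F. Then there exists a constant C (depending only on q, n, F, m) such that for every integer p ≥ 1, |χ(p) − (1/12)·q^{n−2}·(q²−1)·p³| ≤ C·p², where χ(p) = qⁿ + (1/2)·S(p). -/
import Mathlib


open Finset

/-- The `i`-th standard basis vector of `G = (ℤ/qℤ)ⁿ`. -/
def stdVec (q n : ℕ) (i : Fin n) : Fin n → ZMod q := Pi.single i 1

/-- The set `{0, e₁+e₂, e₁, e₂, …, eₙ}` of required elements of an admissible set. -/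
def reqSet (q n : ℕ) (hn : 3 ≤ n) : Finset (Fin n → ZMod q) :=
  insert 0 (insert (stdVec q n ⟨0, by omega⟩ + stdVec q n ⟨1, by omega⟩)
    (Finset.image (stdVec q n) Finset.univ))

/-- `F ⊆ G = (ℤ/qℤ)ⁿ` is admissible if it contains `{0, e₁+e₂, e₁, …, eₙ}`,
`F ∩ kF = {0}` for `k = 2, …, q-1`, and `G = ⋃_{k=1}^{q-1} kF`. -/
def Admissible (q n : ℕ) [NeZero q] (hn : 3 ≤ n) (F : Finset (Fin n → ZMod q)) : Prop :=
  reqSet q n hn ⊆ F ∧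
  (∀ k : ℕ, 2 ≤ k → k ≤ q - 1 → F ∩ F.image (fun σ => k • σ) = {0}) ∧
  (Finset.Icc 1 (q - 1)).biUnion (fun k => F.image (fun σ => k • σ)) = Finset.univ

/-- `m : G → {0, …, q-1}` is a coefficient system for `F` if `m_{e₁} = 1`,
`m_σ = 0` off `F`, and `∑_{σ ∈ G} m_σ • σ = 0` in `G`. -/
def CoeffSystem (q n : ℕ) [NeZero q] (hn : 3 ≤ n) (F : Finset (Fin n → ZMod q))
    (m : (Fin n → ZMod q) → ℕ) : Prop :=
  (∀ σ, m σ ≤ q - 1) ∧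
  m (stdVec q n ⟨0, by omega⟩) = 1 ∧
  (∀ σ ∉ F, m σ = 0) ∧
  ∑ σ : Fin n → ZMod q, m σ • σ = 0

/-- `T = ∑_{σ ∈ F ∖ {0,e₁}} (q + m_σ)`. -/
def Tsum (q n : ℕ) (hn : 3 ≤ n) (F : Finset (Fin n → ZMod q))
    (m : (Fin n → ZMod q) → ℕ) : ℕ :=
  ∑ σ ∈ F \ {0, stdVec q n ⟨0, by omega⟩}, (q + m σ)

/-- `f(γ) = ∑_{σ ∈ F ∖ {0,e₁}} ((γ·σ)‾)·(q + m_σ)`, where `(γ·σ)‾ ∈ {0,…,q-1}`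
is the canonical representative of `∑ᵢ γᵢσᵢ ∈ ℤ/qℤ`. -/
def fVal (q n : ℕ) (hn : 3 ≤ n) (F : Finset (Fin n → ZMod q))
    (m : (Fin n → ZMod q) → ℕ) (γ : Fin n → ZMod q) : ℕ :=
  ∑ σ ∈ F \ {0, stdVec q n ⟨0, by omega⟩}, (∑ i, γ i * σ i).val * (q + m σ)

/-- `K²(p) = qⁿ·[(−3 + ((q−1)/q)(p²+p+1+T))² − (p²+p+1)·(1 − ((q−1)/q)(p+1))²]`. -/
def Ksq (q n : ℕ) (hn : 3 ≤ n) (F : Finset (Fin n → ZMod q))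
    (m : (Fin n → ZMod q) → ℕ) (p : ℕ) : ℚ :=
  (q : ℚ) ^ n *
    ((-3 + (((q : ℚ) - 1) / (q : ℚ)) *
        ((p : ℚ) ^ 2 + (p : ℚ) + 1 + (Tsum q n hn F m : ℚ))) ^ 2
      - ((p : ℚ) ^ 2 + (p : ℚ) + 1) *
        (1 - (((q : ℚ) - 1) / (q : ℚ)) * ((p : ℚ) + 1)) ^ 2)

/-- `S(p) = (1/q²)·∑_{γ∈G} [(γ̄₁(p²+p+1)+f(γ))·(−3q+γ̄₁(p²+p+1)+f(γ))
  + γ̄₁(p+1)(q−γ̄₁(p+1))(p²+p+1)]`. -/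
def Sval (q n : ℕ) [NeZero q] (hn : 3 ≤ n) (F : Finset (Fin n → ZMod q))
    (m : (Fin n → ZMod q) → ℕ) (p : ℕ) : ℚ :=
  (1 / (q : ℚ) ^ 2) *
    ∑ γ : Fin n → ZMod q,
      ((((γ ⟨0, by omega⟩).val : ℚ) * ((p : ℚ) ^ 2 + (p : ℚ) + 1) + (fVal q n hn F m γ : ℚ)) *
          (-3 * (q : ℚ) + ((γ ⟨0, by omega⟩).val : ℚ) * ((p : ℚ) ^ 2 + (p : ℚ) + 1)
            + (fVal q n hn F m γ : ℚ))
        + ((γ ⟨0, by omega⟩).val : ℚ) * ((p : ℚ) + 1)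
            * ((q : ℚ) - ((γ ⟨0, by omega⟩).val : ℚ) * ((p : ℚ) + 1))
            * ((p : ℚ) ^ 2 + (p : ℚ) + 1))

/-- `χ(p) = qⁿ + (1/2)·S(p)`. -/
def chiVal (q n : ℕ) [NeZero q] (hn : 3 ≤ n) (F : Finset (Fin n → ZMod q))
    (m : (Fin n → ZMod q) → ℕ) (p : ℕ) : ℚ :=
  (q : ℚ) ^ n + (1 / 2) * Sval q n hn F m p

lemma sum_zmod_val' (q : ℕ) [NeZero q] (g : ℕ → ℚ) :
    ∑ x : ZMod q, g x.val = ∑ k ∈ Finset.range q, g k := by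
  refine Finset.sum_nbij' (fun x => x.val) (fun k => (k : ZMod q)) ?_ ?_ ?_ ?_ ?_
  · intro x _; exact Finset.mem_range.2 (ZMod.val_lt x)
  · intro k _; exact Finset.mem_univ _
  · intro x _; exact ZMod.natCast_zmod_val x
  · intro k hk; exact ZMod.val_cast_of_lt (Finset.mem_range.1 hk)
  · intro x _; rfl

lemma sum_pi_eval' (q n : ℕ) [NeZero q] (i : Fin n) (g : ZMod q → ℚ) :
    ∑ γ : Fin n → ZMod q, g (γ i) = (q : ℚ) ^ (n - 1) * ∑ x : ZMod q, g x := by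
  rw [← Equiv.sum_comp (Equiv.funSplitAt i (ZMod q)).symm (fun γ => g (γ i))]
  simp only [Fintype.sum_prod_type, Equiv.funSplitAt_symm_apply, dif_pos rfl]
  simp [Finset.sum_const, Finset.card_univ, ZMod.card, Fintype.card_fun,
    Fintype.card_subtype_compl, Fintype.card_subtype_eq, mul_comm]
  rw [← Finset.sum_mul]

lemma sum_range_id_rat (q : ℕ) : ∑ k ∈ Finset.range q, (k : ℚ) = q * (q - 1) / 2 := by
  induction q with
  | zero => simp
  | succ q ih => rw [Finset.sum_range_succ, ih]; push_cast; ring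

lemma sum_range_sq_rat (q : ℕ) :
    ∑ k ∈ Finset.range q, (k : ℚ) ^ 2 = q * (q - 1) * (2 * q - 1) / 6 := by
  induction q with
  | zero => simp
  | succ q ih => rw [Finset.sum_range_succ, ih]; push_cast; ring

/-- `χ(p) = (1/12)·q^{n−2}·(q²−1)·p³ + O(p²)`. -/
theorem stmt11 (q n : ℕ) [NeZero q] (hq : q.Prime) (hq3 : 3 ≤ q) (hn : 3 ≤ n)
    (F : Finset (Fin n → ZMod q)) (hF : Admissible q n hn F)
    (m : (Fin n → ZMod q) → ℕ) (hm : CoeffSystem q n hn F m) :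
    ∃ C : ℚ, ∀ p : ℕ, 1 ≤ p →
      |chiVal q n hn F m p
          - (1 / 12) * (q : ℚ) ^ (n - 2) * ((q : ℚ) ^ 2 - 1) * (p : ℚ) ^ 3|
        ≤ C * (p : ℚ) ^ 2 := by
  have hq0 : (q : ℚ) ≠ 0 := Nat.cast_ne_zero.2 hq.ne_zero
  have hpow : (q : ℚ) ^ (n - 1) = (q : ℚ) ^ (n - 2) * (q : ℚ) := by
    rw [← pow_succ]; congr 1; omega
  set i0 : Fin n := ⟨0, by omega⟩ with hi0
  have hA1 : (∑ γ : Fin n → ZMod q, ((γ i0).val : ℚ))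
      = (q : ℚ) ^ (n - 2) * (q : ℚ) * ((q : ℚ) * ((q : ℚ) - 1) / 2) := by
    rw [sum_pi_eval' q n i0 (fun x => (x.val : ℚ)), sum_zmod_val' q (fun k => (k : ℚ)),
      sum_range_id_rat, hpow]
  have hA2 : (∑ γ : Fin n → ZMod q, ((γ i0).val : ℚ) ^ 2)
      = (q : ℚ) ^ (n - 2) * (q : ℚ) * ((q : ℚ) * ((q : ℚ) - 1) * (2 * (q : ℚ) - 1) / 6) := by
    rw [sum_pi_eval' q n i0 (fun x => (x.val : ℚ) ^ 2), sum_zmod_val' q (fun k => (k : ℚ) ^ 2),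
      sum_range_sq_rat, hpow]
  set b0 : ℚ := ∑ γ : Fin n → ZMod q, (fVal q n hn F m γ : ℚ) with hb0
  set b1 : ℚ := ∑ γ : Fin n → ZMod q, ((γ i0).val : ℚ) * (fVal q n hn F m γ : ℚ) with hb1
  set b2 : ℚ := ∑ γ : Fin n → ZMod q, ((fVal q n hn F m γ : ℚ)) ^ 2 with hb2
  set A1v : ℚ := (q : ℚ) ^ (n - 2) * (q : ℚ) * ((q : ℚ) * ((q : ℚ) - 1) / 2) with hA1v
  set A2v : ℚ := (q : ℚ) ^ (n - 2) * (q : ℚ) *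
    ((q : ℚ) * ((q : ℚ) - 1) * (2 * (q : ℚ) - 1) / 6) with hA2v
  have hS : ∀ p : ℕ, Sval q n hn F m p
      = (1 / (q : ℚ) ^ 2) *
        (A2v * (-(p : ℚ) ^ 3 - (p : ℚ) ^ 2 - (p : ℚ))
          + (q : ℚ) * A1v * ((p : ℚ) ^ 3 - (p : ℚ) ^ 2 - (p : ℚ) - 2)
          + 2 * ((p : ℚ) ^ 2 + (p : ℚ) + 1) * b1 + b2 - 3 * (q : ℚ) * b0) := by
    intro p
    unfold Sval
    congr 1
    trans ∑ γ : Fin n → ZMod q,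
        (((γ i0).val : ℚ) ^ 2 * (-(p : ℚ) ^ 3 - (p : ℚ) ^ 2 - (p : ℚ))
          + ((γ i0).val : ℚ) * ((q : ℚ) * ((p : ℚ) ^ 3 - (p : ℚ) ^ 2 - (p : ℚ) - 2))
          + 2 * ((p : ℚ) ^ 2 + (p : ℚ) + 1) * (((γ i0).val : ℚ) * (fVal q n hn F m γ : ℚ))
          + ((fVal q n hn F m γ : ℚ)) ^ 2
          - 3 * (q : ℚ) * (fVal q n hn F m γ : ℚ))
    · exact Finset.sum_congr rfl fun γ _ => by ring
    · simp only [Finset.sum_add_distrib, Finset.sum_sub_distrib,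
        ← Finset.sum_mul, ← Finset.mul_sum]
      rw [hA1, hA2]
      ring
  set c2 : ℚ := (1 / (2 * (q : ℚ) ^ 2)) * (-A2v - (q : ℚ) * A1v + 2 * b1) with hc2
  set c0 : ℚ := (q : ℚ) ^ n
    + (1 / (2 * (q : ℚ) ^ 2)) * (-2 * (q : ℚ) * A1v + 2 * b1 + b2 - 3 * (q : ℚ) * b0) with hc0
  have hkey : ∀ p : ℕ, chiVal q n hn F m p
      - (1 / 12) * (q : ℚ) ^ (n - 2) * ((q : ℚ) ^ 2 - 1) * (p : ℚ) ^ 3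
      = c2 * (p : ℚ) ^ 2 + c2 * (p : ℚ) + c0 := by
    intro p
    rw [chiVal, hS p, hc2, hc0, hA1v, hA2v]
    field_simp
    ring
  refine ⟨|c2| + |c2| + |c0|, fun p hp => ?_⟩
  have hp1 : (1 : ℚ) ≤ (p : ℚ) := by exact_mod_cast hp
  have hx2 : (p : ℚ) ≤ (p : ℚ) ^ 2 := by nlinarith
  rw [hkey p, abs_le]
  constructor <;>
    nlinarith [le_abs_self c2, neg_abs_le c2, le_abs_self c0, neg_abs_le c0,
      abs_nonneg c2, abs_nonneg c0]
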